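/- arXiv:math/9909118 — 4 statements merged into one kernel-verified Lean document; each statement's English description precedes it below -/
import Mathlib

section
/- For any integer r ≥ 1 and any indeterminates z_1,...,z_r, the antisymmetrization identity holds: ∑_{σ ∈ S_r} (-1)^{l(σ)} ∏_{k<s} (z_{σ(k)} - q^{-2} z_{σ(s)}) = q^{-r(r-1)/2} [r]!_q ∏_{k<s} (z_k - z_s), where [r]!_q = ∏_{m=1}^r (q^m - q^{-m})/(q - q^{-1}) and l(σ) denotes the length (number of inversions) of the permutation σ. -/
open MvPolynomial Finset

/-- The field ℚ(q) of rational functions. -/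
noncomputable abbrev K0 : Type := RatFunc ℚ

noncomputable def q0 : K0 := RatFunc.X

/-- The q-integer [m] = (q^m - q^{-m})/(q - q^{-1}). -/
noncomputable def qInt0 (m : ℕ) : K0 := (q0 ^ m - q0⁻¹ ^ m) / (q0 - q0⁻¹)

/-- The q-factorial [r]! = [r][r-1]⋯[1]. -/
noncomputable def qFact0 (r : ℕ) : K0 := ∏ m ∈ Finset.Icc 1 r, qInt0 m

/-- The number of inversions (length) of a permutation. -/
def inv0 {r : ℕ} (σ : Equiv.Perm (Fin r)) : ℕ :=
  (Finset.univ.filter (fun p : Fin r × Fin r => p.1 < p.2 ∧ σ p.2 < σ p.1)).card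

/-!
Write `t = q⁻²` and `V(z) = ∏_{k<s} (z_k - z_s)`. Splitting a permutation according to its value
`σ 0 = a`, induction on the number of variables reduces the antisymmetrised sum for `n + 1`
variables to `[n]!_t · ∑_a (-1)^a ∏_{j ≠ a} (z_a - t z_j) · V(z without z_a)`. Since
`(1 - t) z_a ∏_{j ≠ a} (z_a - t z_j) = ∏_j (z_a - t z_j) - t^{n+1} ∏_j (z_a - z_j)`, the product
`∏_{j ≠ a} (z_a - t z_j)` is a polynomial of degree `n` in `z_a` whose coefficients are symmetric
in all the variables and whose leading coefficient is `1 + t + ⋯ + t^n`. Laplace expansion of a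
Vandermonde determinant shows that the alternating sum only sees this leading coefficient.
Finally `∏_{m=1}^{r} (1 + q⁻² + ⋯ + q^{-2(m-1)}) = q^{-r(r-1)/2} [r]!_q`.
-/

open Equiv Matrix

theorem Equiv.Perm.sign_eq_neg_one_pow_inv0 {n : ℕ} (σ : Perm (Fin n)) :
    σ.sign = (-1) ^ inv0 σ := by
  rw [σ.sign_eq_prod_prod_Ioi, inv0, ← prod_const, prod_filter, Fintype.prod_prod_type]
  refine prod_congr rfl fun i _ => ?_
  rw [← filter_lt_eq_Ioi, prod_filter]
  refine prod_congr rfl fun j _ => ?_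
  by_cases hij : i < j
  · rcases (σ.injective.ne hij.ne).lt_or_gt with h | h <;> simp [hij, h, h.not_gt]
  · simp [hij]

lemma sum_sign_mul_mul_left {α R : Type*} [DecidableEq α] [Fintype α] [CommRing R]
    (ρ : Perm α) (f : Perm α → R) :
    ∑ π, (Perm.sign π : R) * f (ρ * π) = Perm.sign ρ * ∑ π, (Perm.sign π : R) * f π := by
  rw [← Equiv.sum_comp (Equiv.mulLeft ρ⁻¹), mul_sum]
  refine sum_congr rfl fun π _ => ?_
  simp [mul_assoc]

lemma Fin.exists_perm_swap_zero_succ_eq_succAbove {n : ℕ} (a : Fin (n + 1)) :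
    ∃ ρ : Perm (Fin n), (∀ j, swap 0 a j.succ = a.succAbove (ρ j)) ∧
      (if a = 0 then 1 else -1) * Perm.sign ρ = (-1) ^ (a : ℕ) := by
  cases a using Fin.cases with
  | zero => exact ⟨1, by simp, by simp⟩
  | succ i => exact ⟨i.cycleRange, fun j => (Fin.succAbove_cycleRange i j).symm,
      by simp [Fin.sign_cycleRange, pow_succ]⟩

section Antisymmetrization

variable {A : Type*} [CommRing A]

theorem Multiset.prod_map_sub_mul_eq_sum_esymm (s : Multiset A) (t y : A) :
    (s.map fun w => y - t * w).prod =
      ∑ j ∈ Finset.range (card s + 1), (-t) ^ j * s.esymm j * y ^ (card s - j) := by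
  have h := congrArg (Polynomial.eval y) (Multiset.prod_X_sub_X_eq_sum_esymm (s.map (t * ·)))
  simp only [Polynomial.eval_multiset_prod, Multiset.map_map, Function.comp_def,
    Polynomial.eval_sub, Polynomial.eval_X, Polynomial.eval_C, Polynomial.eval_finsetSum,
    Polynomial.eval_mul, Polynomial.eval_pow, Polynomial.eval_neg, Polynomial.eval_one,
    Multiset.card_map] at h
  rw [h]
  refine sum_congr rfl fun j _ => ?_
  have hsmul := Multiset.pow_smul_esymm t j s
  simp only [smul_eq_mul] at hsmul
  rw [← hsmul, neg_pow]
  ring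

lemma one_sub_mul_mul_sum_esymm_eq {n : ℕ} (w : Fin (n + 1) → A) (t y : A) :
    (1 - t) * y * ∑ k ∈ range (n + 1),
        (-t) ^ k * (∑ i ∈ range (n + 1 - k), t ^ i) * (univ.val.map w).esymm k * y ^ (n - k) =
      ∏ b, (y - t * w b) - t ^ (n + 1) * ∏ b, (y - w b) := by
  have hvieta := Multiset.prod_map_sub_mul_eq_sum_esymm (univ.val.map w)
  simp only [Multiset.map_map, Function.comp_def, Multiset.card_map, card_val, card_univ,
    Fintype.card_fin, prod_map_val] at hvieta
  set e := (univ.val.map w).esymm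
  calc _ = ∑ k ∈ range (n + 1), ((-t) ^ k - t ^ (n + 1) * (-1) ^ k) * e k * y ^ (n + 1 - k) := by
        rw [mul_sum]
        refine sum_congr rfl fun k hk => ?_
        obtain ⟨d, rfl⟩ := Nat.exists_eq_add_of_le (Nat.lt_succ_iff.mp (mem_range.mp hk))
        rw [show k + d + 1 - k = d + 1 by omega, show k + d - k = d by omega, neg_pow]
        linear_combination (-1) ^ k * t ^ k * e k * y ^ (d + 1) * mul_neg_geom_sum t (d + 1)
    _ = ∑ k ∈ range (n + 2), ((-t) ^ k - t ^ (n + 1) * (-1) ^ k) * e k * y ^ (n + 1 - k) := by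
        rw [sum_range_succ _ (n + 1), neg_pow t]
        ring
    _ = _ := by
        rw [hvieta, show ∏ b, (y - w b) = ∏ b, (y - 1 * w b) by simp only [one_mul], hvieta,
          mul_sum, ← sum_sub_distrib]
        refine sum_congr rfl fun k _ => ?_
        rw [neg_pow (1 : A)]
        ring

lemma prod_sub_mul_succAbove_eq_sum [IsDomain A] {n : ℕ} {t : A} (w : Fin (n + 1) → A)
    (a : Fin (n + 1)) (ha : (1 - t) * w a ≠ 0) :
    ∏ j, (w a - t * w (a.succAbove j)) = ∑ k ∈ range (n + 1),
      (-t) ^ k * (∑ i ∈ range (n + 1 - k), t ^ i) * (univ.val.map w).esymm k * w a ^ (n - k) := by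
  refine mul_left_cancel₀ ha ?_
  rw [one_sub_mul_mul_sum_esymm_eq, prod_eq_zero (f := fun b => w a - w b) (mem_univ a)
    (sub_self _), mul_zero, sub_zero, Fin.prod_univ_succAbove _ a]
  ring

/-- `qVandermonde 1 v` is the Vandermonde product `∏_{i<j} (v i - v j)`; note that
`Matrix.det_vandermonde` uses the opposite orientation. -/
def qVandermonde {n : ℕ} (t : A) (v : Fin n → A) : A :=
  ∏ i, ∏ j ∈ Ioi i, (v i - t * v j)

lemma qVandermonde_succ {n : ℕ} (t : A) (v : Fin (n + 1) → A) :
    qVandermonde t v = (∏ j : Fin n, (v 0 - t * v j.succ)) * qVandermonde t (v ∘ Fin.succ) := by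
  simp only [qVandermonde, Fin.prod_univ_succ, Fin.prod_Ioi_zero, Fin.prod_Ioi_succ,
    Function.comp_apply]

lemma det_projVandermonde_one {n : ℕ} (v : Fin n → A) :
    (projVandermonde 1 v).det = qVandermonde 1 v := by
  simp [det_projVandermonde, qVandermonde]

/-- Laplace expansion along column `0` of `projVandermonde 1 v` (whose columns are
`v ^ n, …, v ^ 0`) with that column replaced by `v ^ m`. -/
lemma sum_neg_one_pow_mul_pow_mul_qVandermonde {n m : ℕ} (v : Fin (n + 1) → A) (hm : m ≤ n) :
    ∑ a : Fin (n + 1), (-1) ^ (a : ℕ) * v a ^ m * qVandermonde 1 (v ∘ a.succAbove) =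
      if m = n then qVandermonde 1 v else 0 := by
  set M := (projVandermonde 1 v).updateCol 0 (fun i => v i ^ m)
  have hminor (a : Fin (n + 1)) :
      M.submatrix a.succAbove Fin.succ = projVandermonde 1 (v ∘ a.succAbove) := by
    ext i j
    simp [M, projVandermonde_apply, Fin.rev_succ]
  calc _ = M.det := by simp [det_succ_column_zero, hminor, det_projVandermonde_one, M]
    _ = _ := by
      split_ifs with h
      · subst h
        rw [← det_projVandermonde_one]
        congr 1
        ext i j
        rcases eq_or_ne j 0 with rfl | hj
        · simp [M, projVandermonde_apply]
        · simp [M, hj]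
      · have hlt : n - 1 - m < n := by omega
        refine det_zero_of_column_eq (i := 0) (j := (⟨n - 1 - m, hlt⟩ : Fin n).succ)
          (Fin.succ_ne_zero _).symm fun i => ?_
        simp only [M, updateCol_self, updateCol_ne (Fin.succ_ne_zero _), projVandermonde_apply,
          Pi.one_apply, one_pow, one_mul, Fin.val_rev, Fin.val_succ]
        congr 1
        omega

lemma sum_neg_one_pow_mul_sum_mul_qVandermonde {n : ℕ} (v : Fin (n + 1) → A) (c : ℕ → A) :
    ∑ a : Fin (n + 1), (-1) ^ (a : ℕ) * (∑ k ∈ range (n + 1), c k * v a ^ (n - k)) *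
        qVandermonde 1 (v ∘ a.succAbove) = c 0 * qVandermonde 1 v := by
  calc _ = ∑ k ∈ range (n + 1), c k *
        ∑ a : Fin (n + 1), (-1) ^ (a : ℕ) * v a ^ (n - k) * qVandermonde 1 (v ∘ a.succAbove) := by
        simp_rw [mul_sum, sum_mul]
        rw [sum_comm]
        exact sum_congr rfl fun k _ => sum_congr rfl fun a _ => by ring
    _ = ∑ k ∈ range (n + 1), c k * if n - k = n then qVandermonde 1 v else 0 := by
        simp_rw [sum_neg_one_pow_mul_pow_mul_qVandermonde v (Nat.sub_le n _)]
    _ = c 0 * qVandermonde 1 v := by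
        rw [sum_eq_single 0 (fun k hk hk0 => by rw [if_neg (by simp at hk; omega), mul_zero])
          (by simp), if_pos (Nat.sub_zero n)]

/-- It suffices to treat generic variables over `ℤ[T]`, where `(1 - T) X_a` can be cancelled. -/
lemma sum_neg_one_pow_mul_prod_mul_qVandermonde {n : ℕ} (t : A) (v : Fin (n + 1) → A) :
    ∑ a : Fin (n + 1), (-1) ^ (a : ℕ) * (∏ j, (v a - t * v (a.succAbove j))) *
        qVandermonde 1 (v ∘ a.succAbove) =
      (∑ i ∈ range (n + 1), t ^ i) * qVandermonde 1 v := by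
  let T : MvPolynomial (Fin (n + 1)) (Polynomial ℤ) := C Polynomial.X
  have huniv : ∑ a : Fin (n + 1), (-1) ^ (a : ℕ) * (∏ j, (X a - T * X (a.succAbove j))) *
        qVandermonde 1 (X ∘ a.succAbove) =
      (∑ i ∈ range (n + 1), T ^ i) * qVandermonde 1 X := by
    have hT : 1 - T ≠ 0 := by
      rw [sub_ne_zero, ne_comm, Ne, ← C_1, C_inj, ← Polynomial.C_1]
      exact Polynomial.X_ne_C 1
    simp_rw [prod_sub_mul_succAbove_eq_sum _ _ (mul_ne_zero hT (X_ne_zero _)),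
      sum_neg_one_pow_mul_sum_mul_qVandermonde]
    simp [Multiset.esymm]
  have := congrArg (eval₂Hom (Polynomial.eval₂RingHom (Int.castRingHom A) t) v) huniv
  simpa [T, qVandermonde] using this

theorem sum_sign_mul_qVandermonde_comp (t : A) :
    ∀ {n : ℕ} (v : Fin n → A), ∑ σ : Perm (Fin n), (Perm.sign σ : A) * qVandermonde t (v ∘ σ) =
      (∏ m ∈ range n, ∑ i ∈ range (m + 1), t ^ i) * qVandermonde 1 v
  | 0, v => by simp [qVandermonde, Subsingleton.elim _ (1 : Perm (Fin 0))]
  | n + 1, v => by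
    have hslice (a : Fin (n + 1)) : ∑ π, (Perm.sign (Perm.decomposeFin.symm (a, π)) : A) *
        qVandermonde t (v ∘ Perm.decomposeFin.symm (a, π)) =
        (∏ m ∈ range n, ∑ i ∈ range (m + 1), t ^ i) * ((-1) ^ (a : ℕ) *
          (∏ j, (v a - t * v (a.succAbove j))) * qVandermonde 1 (v ∘ a.succAbove)) := by
      obtain ⟨ρ, hρ, hsign⟩ := Fin.exists_perm_swap_zero_succ_eq_succAbove a
      have hcomp (π : Perm (Fin n)) : v ∘ Perm.decomposeFin.symm (a, π) ∘ Fin.succ =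
          (v ∘ a.succAbove) ∘ (ρ * π) := by
        ext j; simp [hρ]
      have hterm (π : Perm (Fin n)) : (Perm.sign (Perm.decomposeFin.symm (a, π)) : A) *
          qVandermonde t (v ∘ Perm.decomposeFin.symm (a, π)) =
          ((if a = 0 then 1 else -1 : ℤˣ) : A) * (∏ j, (v a - t * v (a.succAbove j))) *
            ((Perm.sign π : A) * qVandermonde t ((v ∘ a.succAbove) ∘ (ρ * π))) := by
        rw [qVandermonde_succ, Function.comp_assoc, hcomp, Perm.decomposeFin.symm_sign,
          ← Equiv.prod_comp (ρ * π) (fun j => v a - t * v (a.succAbove j))]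
        simp only [Function.comp_apply, Perm.decomposeFin_symm_apply_zero,
          Perm.decomposeFin_symm_apply_succ, hρ, Perm.mul_apply, Units.val_mul, Int.cast_mul]
        ring
      have hsignA := congrArg (fun u : ℤˣ => ((u : ℤ) : A)) hsign
      push_cast at hsignA
      rw [sum_congr rfl fun π _ => hterm π, ← mul_sum,
        sum_sign_mul_mul_left ρ (fun σ => qVandermonde t ((v ∘ a.succAbove) ∘ σ)),
        sum_sign_mul_qVandermonde_comp t (v ∘ a.succAbove)]
      linear_combination (∏ m ∈ range n, ∑ i ∈ range (m + 1), t ^ i) *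
        (∏ j, (v a - t * v (a.succAbove j))) * qVandermonde 1 (v ∘ a.succAbove) * hsignA
    rw [← Perm.decomposeFin.symm.sum_comp, Fintype.sum_prod_type]
    simp_rw [hslice, ← mul_sum, sum_neg_one_pow_mul_prod_mul_qVandermonde, prod_range_succ]
    ring

end Antisymmetrization

lemma geom_sum_inv_sq_eq {K : Type*} [Field K] {q : K} (hq : q - q⁻¹ ≠ 0) (m : ℕ) :
    ∑ i ∈ range (m + 1), (q⁻¹ ^ 2) ^ i =
      q⁻¹ ^ m * ((q ^ (m + 1) - q⁻¹ ^ (m + 1)) / (q - q⁻¹)) := by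
  have hqx : q * q⁻¹ = 1 := mul_inv_cancel₀ (by rintro rfl; simp at hq)
  have hp : (q * q⁻¹) ^ m = 1 := by rw [hqx, one_pow]
  rw [mul_div_assoc', eq_div_iff hq]
  linear_combination (-q) * geom_sum_mul (q⁻¹ ^ 2) (m + 1) +
    ((∑ i ∈ range (m + 1), (q⁻¹ ^ 2) ^ i) * q⁻¹ - q⁻¹ ^ (2 * m + 1)) * hqx - q * hp

lemma q0_sub_inv_ne_zero : q0 - q0⁻¹ ≠ 0 := by
  intro h
  have hsq : algebraMap (Polynomial ℚ) K0 (Polynomial.X ^ 2) = algebraMap (Polynomial ℚ) K0 1 := by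
    rw [map_pow, RatFunc.algebraMap_X, map_one, ← q0, sq,
      mul_eq_one_iff_eq_inv₀ RatFunc.X_ne_zero, ← sub_eq_zero, h]
  simpa using congrArg (Polynomial.eval 0) (IsFractionRing.injective (Polynomial ℚ) K0 hsq)

lemma prod_geom_sum_inv_sq_q0 (r : ℕ) :
    ∏ m ∈ range r, ∑ i ∈ range (m + 1), (q0⁻¹ ^ 2) ^ i = q0⁻¹ ^ (r * (r - 1) / 2) * qFact0 r := by
  simp_rw [geom_sum_inv_sq_eq q0_sub_inv_ne_zero]
  rw [prod_mul_distrib, prod_pow_eq_pow_sum, sum_range_id, qFact0, ← Ico_add_one_right_eq_Icc,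
    prod_Ico_eq_prod_range]
  simp [qInt0, add_comm]

theorem statement0_general (r : ℕ) :
    ∑ σ : Equiv.Perm (Fin r),
      (-1 : MvPolynomial (Fin r) K0) ^ inv0 σ *
        ∏ k : Fin r, ∏ s ∈ Finset.univ.filter (fun s => k < s),
          (X (σ k) - C (q0⁻¹ ^ 2) * X (σ s)) =
    C (q0⁻¹ ^ (r * (r - 1) / 2) * qFact0 r) *
      ∏ k : Fin r, ∏ s ∈ Finset.univ.filter (fun s => k < s), (X k - X s) := by
  have h := sum_sign_mul_qVandermonde_comp (C (q0⁻¹ ^ 2) : MvPolynomial (Fin r) K0) X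
  have hC : ∏ m ∈ range r, ∑ i ∈ range (m + 1), (C (q0⁻¹ ^ 2) : MvPolynomial (Fin r) K0) ^ i =
      C (∏ m ∈ range r, ∑ i ∈ range (m + 1), (q0⁻¹ ^ 2) ^ i) := by
    simp only [map_prod, map_sum, map_pow]
  rw [hC, prod_geom_sum_inv_sq_q0] at h
  simp only [qVandermonde, Function.comp_apply, one_mul, Perm.sign_eq_neg_one_pow_inv0] at h
  simp_rw [filter_lt_eq_Ioi, ← h]
  refine sum_congr rfl fun σ _ => ?_
  push_cast
  rfl

theorem statement0 (r : ℕ) (hr : 1 ≤ r) :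
    ∑ σ : Equiv.Perm (Fin r),
      (-1 : MvPolynomial (Fin r) K0) ^ inv0 σ *
        ∏ k : Fin r, ∏ s ∈ Finset.univ.filter (fun s => k < s),
          (X (σ k) - C (q0⁻¹ ^ 2) * X (σ s)) =
    C (q0⁻¹ ^ (r * (r - 1) / 2) * qFact0 r) *
      ∏ k : Fin r, ∏ s ∈ Finset.univ.filter (fun s => k < s), (X k - X s) :=
  statement0_general r
end

section
/- Let R be a commutative ring and let G ∈ R[[z_1^{±1},...,z_r^{±1}]] be a formal Laurent series invariant under the action of the symmetric group S_r permuting the variables. Then for every integer n, the coefficient of (z_1 z_2 ⋯ z_r)^n in ∏_{j<k}(z_j - z_k)^2 · G is divisible by r! in R (i.e., equals r! times an element of R). -/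
/-!
The squared Vandermonde polynomial is the square of `det (z_i ^ j)`, so by the Leibniz formula
it is `∑_{σ, τ} sign σ · sign τ · z^(e_σ + e_τ)`, where `e_σ i = σ⁻¹ i`. Extracting the
coefficient of `(z_1 ⋯ z_r)^n` after multiplying by `G` is additive, and the substitution
`τ ↦ σ τ` permutes the variables of the `(σ, τ)` term into those of the `(1, τ)` term, so by the
symmetry of `G` the inner sum over `τ` does not depend on `σ`. The coefficient is therefore
`r!` times that inner sum.
-/

open MvPolynomial Finset

/-- The squared Vandermonde polynomial ∏_{j<k}(z_j - z_k)^2 over ℤ. -/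
noncomputable def vand2 (r : ℕ) : MvPolynomial (Fin r) ℤ :=
  ∏ j : Fin r, ∏ k ∈ Finset.univ.filter (fun k => j < k), (X j - X k) ^ 2

theorem Fintype.sum_sum_eq_card_smul_of_mul_left {G M : Type*} [Group G] [Fintype G]
    [AddCommMonoid M] (T : G → G → M) (hT : ∀ g h, T g (g * h) = T 1 h) :
    ∑ g, ∑ h, T g h = Fintype.card G • ∑ h, T 1 h :=
  calc ∑ g, ∑ h, T g h = ∑ _g : G, ∑ h, T 1 h :=
        Finset.sum_congr rfl fun g _ => by
          rw [← Equiv.sum_comp (Equiv.mulLeft g)]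
          exact Finset.sum_congr rfl fun h _ => hT g h
    _ = Fintype.card G • ∑ h, T 1 h := by rw [Finset.sum_const, Finset.card_univ]

namespace MvPolynomial

variable {σ R : Type*} [CommRing R]

/-- With `F d = G (n - d)`, `pairing F P` is the coefficient of `z ^ n` in `P * G`. -/
noncomputable def pairing (F : (σ →₀ ℕ) → R) : MvPolynomial σ ℤ →+ R :=
  (Finsupp.linearCombination ℤ F).toAddMonoidHom.comp
    AddMonoidAlgebra.coeffAddEquiv.toAddMonoidHom

theorem pairing_apply (F : (σ →₀ ℕ) → R) (P : MvPolynomial σ ℤ) :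
    pairing F P = ∑ d ∈ P.support, ((P.coeff d : ℤ) : R) * F d := by
  simp_rw [← zsmul_eq_mul]
  exact Finsupp.linearCombination_apply ℤ _

theorem pairing_monomial (F : (σ →₀ ℕ) → R) (d : σ →₀ ℕ) (c : ℤ) :
    pairing F (monomial d c) = c * F d := by
  show Finsupp.linearCombination ℤ F (Finsupp.single d c) = _
  rw [Finsupp.linearCombination_single, zsmul_eq_mul]

end MvPolynomial

namespace Vandermonde

variable {r : ℕ}

/-- The exponent vector of the Leibniz term of `σ` in `det (X i ^ j)`. -/
noncomputable def leibnizExp (σ : Equiv.Perm (Fin r)) : Fin r →₀ ℕ :=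
  Finsupp.equivFunOnFinite.symm fun i => σ.symm i

@[simp]
theorem leibnizExp_apply (σ : Equiv.Perm (Fin r)) (i : Fin r) :
    leibnizExp σ i = σ.symm i :=
  Finsupp.equivFunOnFinite_symm_apply_apply _ i

theorem leibnizExp_add_leibnizExp_mul (σ τ : Equiv.Perm (Fin r)) (i : Fin r) :
    (leibnizExp σ + leibnizExp (σ * τ)) i =
      (leibnizExp 1 + leibnizExp τ : Fin r →₀ ℕ) (σ.symm i) := by
  simp [← Equiv.Perm.inv_def, mul_inv_rev, Equiv.Perm.mul_apply]

theorem prod_X_pow_eq_monomial_leibnizExp (R : Type*) [CommSemiring R]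
    (σ : Equiv.Perm (Fin r)) :
    ∏ i, (X (σ i) : MvPolynomial (Fin r) R) ^ (i : ℕ) = monomial (leibnizExp σ) 1 := by
  rw [monomial_eq, C_1, one_mul, Finsupp.prod_fintype _ _ fun _ => pow_zero _,
    ← Equiv.prod_comp σ.symm]
  simp

theorem det_vandermonde_X (R : Type*) [CommRing R] :
    (Matrix.vandermonde (X : Fin r → MvPolynomial (Fin r) R)).det =
      ∑ σ : Equiv.Perm (Fin r), monomial (leibnizExp σ) (Equiv.Perm.sign σ : R) := by
  rw [Matrix.det_apply']
  refine Finset.sum_congr rfl fun σ _ => ?_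
  simp_rw [Matrix.vandermonde_apply, prod_X_pow_eq_monomial_leibnizExp]
  rw [← map_intCast (C : R →+* MvPolynomial (Fin r) R), C_mul_monomial, mul_one]

theorem vand2_eq_det_sq :
    vand2 r = (Matrix.vandermonde (X : Fin r → MvPolynomial (Fin r) ℤ)).det ^ 2 := by
  rw [Matrix.det_vandermonde, vand2, ← Finset.prod_pow]
  refine Finset.prod_congr rfl fun j _ => ?_
  rw [← Finset.prod_pow, Finset.filter_lt_eq_Ioi]
  exact Finset.prod_congr rfl fun k _ => by rw [← neg_sub, neg_sq]

theorem vand2_eq_sum :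
    vand2 r = ∑ σ : Equiv.Perm (Fin r), ∑ τ : Equiv.Perm (Fin r),
      monomial (leibnizExp σ + leibnizExp τ)
        ((Equiv.Perm.sign σ : ℤ) * (Equiv.Perm.sign τ : ℤ)) := by
  simp_rw [vand2_eq_det_sq, sq, det_vandermonde_X, Finset.sum_mul_sum, monomial_mul,
    Int.cast_id]

end Vandermonde

open Vandermonde in
/-- A Laurent series is encoded by its coefficient function `G`; the sum is the coefficient of
`(z_1⋯z_r)^n` in `vand2 r * G`. -/
theorem statement4 (r : ℕ) (R : Type*) [CommRing R] (G : (Fin r → ℤ) → R)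
    (hsym : ∀ (σ : Equiv.Perm (Fin r)) (v : Fin r → ℤ), G (v ∘ σ) = G v) (n : ℤ) :
    ∃ c : R,
      (∑ d ∈ (vand2 r).support, (((vand2 r).coeff d : ℤ) : R) *
          G (fun i => n - (d i : ℤ))) = (r.factorial : R) * c := by
  set F : (Fin r →₀ ℕ) → R := fun d => G fun i => n - (d i : ℤ)
  let T : Equiv.Perm (Fin r) → Equiv.Perm (Fin r) → R := fun σ τ =>
    pairing F (monomial (leibnizExp σ + leibnizExp τ)
      ((Equiv.Perm.sign σ : ℤ) * (Equiv.Perm.sign τ : ℤ)))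
  have hT : ∀ σ τ, T σ (σ * τ) = T 1 τ := by
    intro σ τ
    simp only [T, pairing_monomial, F]
    congr 1
    · norm_cast
      rw [map_mul, ← mul_assoc, Int.units_mul_self, map_one]
    · rw [← hsym σ]
      congr 1
      ext i
      simp [leibnizExp_add_leibnizExp_mul]
  refine ⟨∑ τ, T 1 τ, ?_⟩
  rw [← pairing_apply, vand2_eq_sum, map_sum]
  simp_rw [map_sum]
  rw [Fintype.sum_sum_eq_card_smul_of_mul_left T hT, Fintype.card_perm, Fintype.card_fin,
    nsmul_eq_mul]
end

section
/- For the Cartan matrix A of type D_n (n ≥ 4), the determinant of the matrix [A] with entries [a_{ij}]_q equals [2]_q (q^{n-1} + q^{-(n-1)}) in ℤ[q, q^{-1}]. -/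
/-
Node 0 of the Dynkin diagram D_n is a leaf attached only to node 1, and deleting it from
D_{n+1} leaves D_n. Expanding the determinant along that leaf gives the Chebyshev-type
recurrence d_{n+2} = [2] d_{n+1} - d_n for n ≥ 3, which the sequence [2] (q^{n-1} + q^{-(n-1)})
also satisfies because [2] = q + q^{-1}; the two agree for n = 3, 4.
-/

open Finset

noncomputable abbrev K6 : Type := RatFunc ℚ

noncomputable def q6 : K6 := RatFunc.X

noncomputable def qInt6 (m : ℤ) : K6 := (q6 ^ m - q6 ^ (-m)) / (q6 - q6⁻¹)

/-- The Cartan matrix of type D_n (0-indexed nodes 0,…,n-1: a path 0—1—⋯—(n-2)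
together with the extra edge (n-3)—(n-1)). -/
def cartanD (n : ℕ) : Matrix (Fin n) (Fin n) ℤ := fun i j =>
  if i = j then 2
  else if ((i : ℕ) + 1 = j ∧ (j : ℕ) ≤ n - 2) ∨ ((j : ℕ) + 1 = i ∧ (i : ℕ) ≤ n - 2) ∨
      ((i : ℕ) = n - 3 ∧ (j : ℕ) = n - 1) ∨ ((i : ℕ) = n - 1 ∧ (j : ℕ) = n - 3) then -1
  else 0

theorem Matrix.det_eq_sub_of_leaf {R : Type*} [CommRing R] {m : ℕ}
    (M : Matrix (Fin (m + 2)) (Fin (m + 2)) R)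
    (hrow : ∀ j : Fin m, M 0 j.succ.succ = 0) (hcol : ∀ i : Fin m, M i.succ.succ 0 = 0) :
    M.det = M 0 0 * (M.submatrix Fin.succ Fin.succ).det -
      M 0 1 * M 1 0 * (M.submatrix (Fin.succ ∘ Fin.succ) (Fin.succ ∘ Fin.succ)).det := by
  have hminor : (M.submatrix Fin.succ (Fin.succAbove 1)).det =
      M 1 0 * (M.submatrix (Fin.succ ∘ Fin.succ) (Fin.succ ∘ Fin.succ)).det := by
    have hcols : Fin.succAbove (1 : Fin (m + 2)) ∘ Fin.succ = Fin.succ ∘ Fin.succ := by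
      funext j; exact Fin.succ_succAbove_succ 0 j
    rw [Matrix.det_succ_column_zero, Fin.sum_univ_succ]
    simp [hcol, hcols, Fin.succAbove]
  rw [Matrix.det_succ_row_zero, Fin.sum_univ_succ, Fin.sum_univ_succ]
  simp only [Fin.val_zero, pow_zero, one_mul, Fin.succAbove_zero, Fin.succ_zero_eq_one, Fin.val_one,
    pow_one, hminor, Fin.val_succ, hrow, mul_zero, zero_mul, Finset.sum_const_zero, add_zero]
  ring

lemma pow_add_inv_pow_add_two {K : Type*} [Field K] {x : K} (hx : x ≠ 0) (k : ℕ) :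
    x ^ (k + 2) + x⁻¹ ^ (k + 2) = (x + x⁻¹) * (x ^ (k + 1) + x⁻¹ ^ (k + 1)) - (x ^ k + x⁻¹ ^ k) := by
  linear_combination (-(x ^ k) - x⁻¹ ^ k) * mul_inv_cancel₀ hx

lemma q6_ne_zero : q6 ≠ 0 := RatFunc.X_ne_zero

lemma q6_sub_inv_ne_zero : q6 - q6⁻¹ ≠ 0 := by
  intro h
  have := congrArg RatFunc.intDegree (sub_eq_zero.mp h)
  simp [q6, RatFunc.intDegree_inv, RatFunc.intDegree_X] at this

lemma qInt6_zero : qInt6 0 = 0 := by simp [qInt6]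

lemma qInt6_neg (m : ℤ) : qInt6 (-m) = -qInt6 m := by
  rw [qInt6, qInt6, neg_neg, ← neg_div, neg_sub]

lemma qInt6_one : qInt6 1 = 1 := by
  rw [qInt6, zpow_one, zpow_neg_one, div_self q6_sub_inv_ne_zero]

lemma qInt6_two : qInt6 2 = q6 + q6⁻¹ := by
  rw [qInt6, div_eq_iff q6_sub_inv_ne_zero, zpow_neg, show (2 : ℤ) = (2 : ℕ) from rfl, zpow_natCast]
  ring

namespace cartanD

variable {m : ℕ}

lemma apply_self (i : Fin m) : cartanD m i i = 2 := if_pos rfl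

lemma apply_zero_one : cartanD (m + 2) 0 1 = -1 := by
  simp only [cartanD, Fin.ext_iff, Fin.val_zero, Fin.val_one]
  grind

lemma apply_one_zero : cartanD (m + 2) 1 0 = -1 := by
  simp only [cartanD, Fin.ext_iff, Fin.val_zero, Fin.val_one]
  grind

lemma apply_zero_succ_succ (hm : 2 ≤ m) (j : Fin m) : cartanD (m + 2) 0 j.succ.succ = 0 := by
  have := j.isLt
  simp only [cartanD, Fin.ext_iff, Fin.val_succ, Fin.val_zero]
  grind

lemma apply_succ_succ_zero (hm : 2 ≤ m) (i : Fin m) : cartanD (m + 2) i.succ.succ 0 = 0 := by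
  have := i.isLt
  simp only [cartanD, Fin.ext_iff, Fin.val_succ, Fin.val_zero]
  grind

lemma submatrix_succ (hm : 3 ≤ m) : (cartanD (m + 1)).submatrix Fin.succ Fin.succ = cartanD m := by
  ext i j
  have := i.isLt; have := j.isLt
  simp only [Matrix.submatrix_apply, cartanD, Fin.ext_iff, Fin.val_succ]
  grind

end cartanD

noncomputable def qCartanD (n : ℕ) : Matrix (Fin n) (Fin n) K6 := (cartanD n).map qInt6

lemma qCartanD_submatrix_succ {m : ℕ} (hm : 3 ≤ m) :
    (qCartanD (m + 1)).submatrix Fin.succ Fin.succ = qCartanD m := by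
  rw [qCartanD, Matrix.submatrix_map, cartanD.submatrix_succ hm, qCartanD]

lemma det_qCartanD_add_two_eq_sub_minor {m : ℕ} (hm : 2 ≤ m) :
    (qCartanD (m + 2)).det = qInt6 2 * (qCartanD (m + 1)).det -
      ((qCartanD (m + 2)).submatrix (Fin.succ ∘ Fin.succ) (Fin.succ ∘ Fin.succ)).det := by
  rw [Matrix.det_eq_sub_of_leaf (qCartanD (m + 2))
    (fun j => by simp [qCartanD, cartanD.apply_zero_succ_succ hm, qInt6_zero])
    (fun i => by simp [qCartanD, cartanD.apply_succ_succ_zero hm, qInt6_zero]),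
    qCartanD_submatrix_succ (by omega)]
  simp [qCartanD, cartanD.apply_self, cartanD.apply_zero_one, cartanD.apply_one_zero, qInt6_neg,
    qInt6_one]

lemma det_qCartanD_add_two {m : ℕ} (hm : 3 ≤ m) :
    (qCartanD (m + 2)).det = qInt6 2 * (qCartanD (m + 1)).det - (qCartanD m).det := by
  rw [det_qCartanD_add_two_eq_sub_minor (by omega), ← Matrix.submatrix_submatrix,
    qCartanD_submatrix_succ (by omega), qCartanD_submatrix_succ hm]

lemma det_qCartanD_three : (qCartanD 3).det = qInt6 2 ^ 3 - 2 * qInt6 2 := by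
  have h : qCartanD 3 = !![qInt6 2, -1, -1; -1, qInt6 2, 0; -1, 0, qInt6 2] := by
    ext i j
    fin_cases i <;> fin_cases j <;> simp [qCartanD, cartanD, qInt6_neg, qInt6_one, qInt6_zero]
  rw [h, Matrix.det_fin_three]
  simp only [Matrix.of_apply, Matrix.cons_val', Matrix.cons_val_zero, Matrix.cons_val_fin_one,
    Matrix.cons_val_one, Matrix.cons_val]
  ring

-- Deleting nodes 0 and 1 from D_4 leaves two isolated nodes, which `cartanD 2` is not.
lemma det_qCartanD_four : (qCartanD 4).det = qInt6 2 ^ 4 - 3 * qInt6 2 ^ 2 := by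
  have hminor : (qCartanD 4).submatrix (Fin.succ ∘ Fin.succ) (Fin.succ ∘ Fin.succ) =
      !![qInt6 2, 0; 0, qInt6 2] := by
    ext i j
    fin_cases i <;> fin_cases j <;> simp [qCartanD, cartanD, qInt6_zero]
  rw [det_qCartanD_add_two_eq_sub_minor le_rfl, det_qCartanD_three, hminor, Matrix.det_fin_two_of]
  ring

lemma det_qCartanD {n : ℕ} (hn : 3 ≤ n) :
    (qCartanD n).det = qInt6 2 * (q6 ^ (n - 1) + q6⁻¹ ^ (n - 1)) := by
  have h : ∀ k : ℕ, (qCartanD (k + 3)).det = qInt6 2 * (q6 ^ (k + 2) + q6⁻¹ ^ (k + 2)) ∧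
      (qCartanD (k + 4)).det = qInt6 2 * (q6 ^ (k + 3) + q6⁻¹ ^ (k + 3)) := by
    intro k
    induction k with
    | zero =>
      have hq := mul_inv_cancel₀ q6_ne_zero
      rw [det_qCartanD_three, det_qCartanD_four, qInt6_two]
      exact ⟨by linear_combination 2 * (q6 + q6⁻¹) * hq,
        by linear_combination 3 * (q6 + q6⁻¹) ^ 2 * hq⟩
    | succ k ih =>
      refine ⟨ih.2, ?_⟩
      rw [det_qCartanD_add_two (by omega), ih.1, ih.2, qInt6_two]
      linear_combination -(q6 + q6⁻¹) * pow_add_inv_pow_add_two q6_ne_zero (k + 2)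
  obtain ⟨k, rfl⟩ : ∃ k, n = k + 3 := ⟨n - 3, by omega⟩
  exact (h k).1

/-- det [A] = [2](q^{n-1} + q^{-(n-1)}) for the q-deformed Cartan matrix of type D_n. -/
theorem statement6 (n : ℕ) (hn : 4 ≤ n) :
    Matrix.det (fun i j => qInt6 (cartanD n i j)) =
      qInt6 2 * (q6 ^ (n - 1 : ℕ) + q6⁻¹ ^ (n - 1 : ℕ)) :=
  det_qCartanD (by omega)
end

section
/- For r ≥ 1, the symmetrized product ∑_{σ ∈ S_r} ∏_{k<s} (z_{σ(k)} - q^{-2} z_{σ(s)})(z_{σ(k)} - z_{σ(s)}) = q^{-r(r-1)/2} [r]!_q ∏_{k<s}(z_k - z_s)^2 in ℤ[q,q^{-1}][z_1,...,z_r]. -/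
open MvPolynomial Finset

noncomputable abbrev K17 : Type := RatFunc ℚ

noncomputable def q17 : K17 := RatFunc.X

noncomputable def qInt17 (m : ℕ) : K17 := (q17 ^ m - q17⁻¹ ^ m) / (q17 - q17⁻¹)

noncomputable def qFact17 (r : ℕ) : K17 := ∏ m ∈ Finset.Icc 1 r, qInt17 m

/-!
Each summand carries the factor `∏_{k<s} (z_{σ k} - z_{σ s})²`, the square of a Vandermonde
determinant and hence independent of `σ`. Dividing it out, the identity becomes
`∑_σ ∏_{k<s} (z_{σ k} - t z_{σ s}) / (z_{σ k} - z_{σ s}) = ∏_{m<r} (1 + t + ⋯ + t^m)` over the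
fraction field, with `t = q⁻²`; the factor `q^{-r(r-1)/2}` converts `[r]!_q` into this product.
Grouping the permutations by `σ 0` proves it by induction on `r`: the new factor is
`∑_p ∏_{i ≠ p} (x_p - t x_i) / (x_p - x_i) = 1 + t + ⋯ + t^{n-1}`, which is Lagrange's formula
for the leading coefficient of `∏_i (X - t x_i)` interpolated at the nodes `0, x_1, …, x_n`.
-/

open Equiv

theorem Fin.prod_univ_erase_eq_prod_swap_succ {M : Type*} [CommMonoid M] {n : ℕ}
    (p : Fin (n + 1)) (f : Fin (n + 1) → M) :
    ∏ i ∈ univ.erase p, f i = ∏ j : Fin n, f (swap 0 p j.succ) := by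
  rw [← Fin.prod_Ioi_zero (fun j => f (swap 0 p j))]
  refine (prod_equiv (swap 0 p) (fun j => ?_) fun _ _ => rfl).symm
  simp [swap_apply_eq_iff]

theorem prod_Ioi_decomposeFin_symm {M : Type*} [CommMonoid M] {n : ℕ}
    (g : Fin (n + 1) → Fin (n + 1) → M) (p : Fin (n + 1)) (τ : Perm (Fin n)) :
    ∏ k, ∏ s ∈ Ioi k, g (Perm.decomposeFin.symm (p, τ) k) (Perm.decomposeFin.symm (p, τ) s) =
      (∏ i ∈ univ.erase p, g p i) *
        ∏ k, ∏ s ∈ Ioi k, g (swap 0 p (τ k).succ) (swap 0 p (τ s).succ) := by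
  simp only [Fin.prod_univ_succ, Fin.prod_Ioi_zero, Fin.prod_Ioi_succ,
    Perm.decomposeFin_symm_apply_zero, Perm.decomposeFin_symm_apply_succ,
    Fin.prod_univ_erase_eq_prod_swap_succ]
  rw [Equiv.prod_comp τ (fun j => g p (swap 0 p j.succ))]

theorem sum_prod_erase_sub_mul_div_sub {F : Type*} [Field F] [DecidableEq F] {t : F}
    (ht : t ≠ 1) {S : Finset F} (hS : (0 : F) ∉ S) :
    ∑ a ∈ S, ∏ b ∈ S.erase a, (a - t * b) / (a - b) = ∑ k ∈ range #S, t ^ k := by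
  have hlc := Lagrange.leadingCoeff_eq_sum (s := insert 0 S) (v := id) (Set.injOn_id _)
    (P := Lagrange.nodal S (t * ·)) (by rw [card_insert_of_notMem hS, Lagrange.degree_nodal]; rfl)
  rw [Lagrange.nodal_monic.leadingCoeff, sum_insert hS, erase_insert hS] at hlc
  have h_zero : (Lagrange.nodal S (t * ·)).eval 0 / ∏ b ∈ S, (0 - b) = t ^ #S := by
    rw [Lagrange.eval_nodal, ← prod_div_distrib, ← prod_const]
    refine prod_congr rfl fun b hb => ?_
    have hb0 : b ≠ 0 := ne_of_mem_of_not_mem hb hS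
    field_simp
    ring
  have h_node : ∀ a ∈ S, (Lagrange.nodal S (t * ·)).eval a / ∏ b ∈ (insert 0 S).erase a, (a - b)
      = (1 - t) * ∏ b ∈ S.erase a, (a - t * b) / (a - b) := by
    intro a ha
    have ha0 : a ≠ 0 := ne_of_mem_of_not_mem ha hS
    rw [erase_insert_of_ne ha0.symm, prod_insert (fun h => hS (mem_of_mem_erase h)),
      Lagrange.eval_nodal, ← mul_prod_erase S _ ha, prod_div_distrib]
    have hprod : ∏ b ∈ S.erase a, (a - b) ≠ 0 :=
      prod_ne_zero_iff.mpr fun b hb => sub_ne_zero.mpr (ne_of_mem_erase hb).symm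
    field_simp
    ring
  simp only [id] at hlc
  rw [h_zero, sum_congr rfl h_node, ← mul_sum] at hlc
  have ht1 : t - 1 ≠ 0 := sub_ne_zero.mpr ht
  rw [geom_sum_eq ht]
  field_simp
  linear_combination hlc

theorem sum_prod_univ_erase_sub_mul_div_sub {F : Type*} [Field F] {t : F} (ht : t ≠ 1)
    {n : ℕ} {x : Fin n → F} (hx : Function.Injective x) (hx0 : ∀ i, x i ≠ 0) :
    ∑ p, ∏ i ∈ univ.erase p, (x p - t * x i) / (x p - x i) = ∑ k ∈ range n, t ^ k := by
  classical
  have h := sum_prod_erase_sub_mul_div_sub ht (S := univ.image x) (by simpa using hx0)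
  rw [card_image_of_injective _ hx, card_univ, Fintype.card_fin, sum_image hx.injOn] at h
  simpa only [← image_erase hx, prod_image hx.injOn] using h

theorem sum_perm_prod_Ioi_sub_mul_div_sub {F : Type*} [Field F] {t : F} (ht : t ≠ 1) :
    ∀ {n : ℕ} {x : Fin n → F}, Function.Injective x → (∀ i, x i ≠ 0) →
      ∑ σ : Perm (Fin n), ∏ k, ∏ s ∈ Ioi k, (x (σ k) - t * x (σ s)) / (x (σ k) - x (σ s)) =
        ∏ m ∈ range n, ∑ j ∈ range (m + 1), t ^ j
  | 0, _, _, _ => by simp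
  | n + 1, x, hx, hx0 => by
    rw [← Equiv.sum_comp Perm.decomposeFin.symm, Fintype.sum_prod_type]
    simp only [prod_Ioi_decomposeFin_symm (fun a b => (x a - t * x b) / (x a - x b)), ← mul_sum]
    have hy : ∀ p : Fin (n + 1), Function.Injective fun j : Fin n => x (swap 0 p j.succ) :=
      fun p _ _ h => Fin.succ_injective n ((swap 0 p).injective (hx h))
    rw [sum_congr rfl fun p _ =>
        congrArg _ (sum_perm_prod_Ioi_sub_mul_div_sub ht (hy p) fun _ => hx0 _),
      ← sum_mul, sum_prod_univ_erase_sub_mul_div_sub ht hx hx0, prod_range_succ, mul_comm]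

theorem prod_Ioi_sub_sq_eq_det_vandermonde_sq {R : Type*} [CommRing R] {n : ℕ}
    (x : Fin n → R) :
    ∏ k, ∏ s ∈ Ioi k, (x k - x s) ^ 2 = (Matrix.vandermonde x).det ^ 2 := by
  simp only [Matrix.det_vandermonde, ← prod_pow, sub_sq_comm]

theorem prod_Ioi_sub_sq_perm {R : Type*} [CommRing R] {n : ℕ} (x : Fin n → R)
    (σ : Perm (Fin n)) :
    ∏ k, ∏ s ∈ Ioi k, (x (σ k) - x (σ s)) ^ 2 = ∏ k, ∏ s ∈ Ioi k, (x k - x s) ^ 2 := by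
  refine (prod_Ioi_sub_sq_eq_det_vandermonde_sq (x ∘ σ)).trans ?_
  rw [prod_Ioi_sub_sq_eq_det_vandermonde_sq,
    show Matrix.vandermonde (x ∘ σ) = (Matrix.vandermonde x).submatrix σ id from rfl,
    Matrix.det_permute, mul_pow, ← Int.cast_pow, ← Units.val_pow_eq_pow_val, Int.units_sq,
    Units.val_one, Int.cast_one, one_mul]

theorem sum_perm_prod_Ioi_sub_mul_mul_sub {R : Type*} [CommRing R] [IsDomain R] {t : R}
    (ht : t ≠ 1) {n : ℕ} {x : Fin n → R} (hx : Function.Injective x) (hx0 : ∀ i, x i ≠ 0) :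
    ∑ σ : Perm (Fin n), ∏ k, ∏ s ∈ Ioi k, (x (σ k) - t * x (σ s)) * (x (σ k) - x (σ s)) =
      (∏ m ∈ range n, ∑ j ∈ range (m + 1), t ^ j) * ∏ k, ∏ s ∈ Ioi k, (x k - x s) ^ 2 := by
  set φ := algebraMap R (FractionRing R)
  have hφ : Function.Injective φ := IsFractionRing.injective R _
  have hy : Function.Injective fun i => φ (x i) := hφ.comp hx
  apply hφ
  simp only [map_sum, map_prod, map_mul, map_sub, map_pow]
  rw [← sum_perm_prod_Ioi_sub_mul_div_sub (hφ.ne_iff' (map_one φ) |>.mpr ht) hy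
    (fun i => (map_ne_zero_iff φ hφ).mpr (hx0 i)), sum_mul]
  refine sum_congr rfl fun σ _ => ?_
  rw [← prod_Ioi_sub_sq_perm _ σ, ← prod_mul_distrib]
  refine prod_congr rfl fun k _ => ?_
  rw [← prod_mul_distrib]
  refine prod_congr rfl fun s hs => ?_
  have hks : φ (x (σ k)) - φ (x (σ s)) ≠ 0 :=
    sub_ne_zero.mpr fun h => (mem_Ioi.mp hs).ne (σ.injective (hy h))
  field_simp

theorem pow_sub_inv_pow_div_sub_inv {K : Type*} [Field K] {q : K} (hq : q ≠ 0)
    (hq2 : q ^ 2 ≠ 1) (m : ℕ) :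
    (q ^ (m + 1) - q⁻¹ ^ (m + 1)) / (q - q⁻¹) = q ^ m * ∑ j ∈ range (m + 1), (q⁻¹ ^ 2) ^ j := by
  have h1 : q⁻¹ ^ 2 ≠ 1 := by rwa [inv_pow, inv_ne_one]
  have h2 : q ^ 2 - 1 ≠ 0 := sub_ne_zero.mpr hq2
  rw [geom_sum_eq h1]
  simp only [inv_pow, ← pow_mul]
  field_simp
  ring

theorem prod_Icc_pow_sub_inv_pow_div_sub_inv {K : Type*} [Field K] {q : K} (hq : q ≠ 0)
    (hq2 : q ^ 2 ≠ 1) (r : ℕ) :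
    ∏ m ∈ Icc 1 r, (q ^ m - q⁻¹ ^ m) / (q - q⁻¹) =
      q ^ (r * (r - 1) / 2) * ∏ m ∈ range r, ∑ j ∈ range (m + 1), (q⁻¹ ^ 2) ^ j := by
  rw [← Ico_add_one_right_eq_Icc, prod_Ico_eq_prod_range, Nat.add_one_sub_one, ← sum_range_id,
    ← prod_pow_eq_pow_sum, ← prod_mul_distrib]
  exact prod_congr rfl fun m _ => by rw [add_comm 1 m, pow_sub_inv_pow_div_sub_inv hq hq2]

theorem RatFunc.X_sq_ne_one {K : Type*} [Field K] : (RatFunc.X : RatFunc K) ^ 2 ≠ 1 := by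
  intro h
  have hdeg := congrArg RatFunc.intDegree h
  rw [sq, RatFunc.intDegree_mul RatFunc.X_ne_zero RatFunc.X_ne_zero, RatFunc.intDegree_X] at hdeg
  norm_num at hdeg

theorem inv_q17_pow_mul_qFact17 (r : ℕ) :
    q17⁻¹ ^ (r * (r - 1) / 2) * qFact17 r =
      ∏ m ∈ range r, ∑ j ∈ range (m + 1), (q17⁻¹ ^ 2) ^ j := by
  have hq : q17 ≠ 0 := RatFunc.X_ne_zero
  rw [qFact17, prod_congr rfl fun m _ => (qInt17.eq_1 m),
    prod_Icc_pow_sub_inv_pow_div_sub_inv hq RatFunc.X_sq_ne_one, ← mul_assoc, ← mul_pow,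
    inv_mul_cancel₀ hq, one_pow, one_mul]

theorem statement17_general (r : ℕ) :
    ∑ σ : Equiv.Perm (Fin r),
      ∏ k : Fin r, ∏ s ∈ Finset.univ.filter (fun s => k < s),
        ((X (σ k) - C (q17⁻¹ ^ 2) * X (σ s)) * (X (σ k) - X (σ s))) =
    C (q17⁻¹ ^ (r * (r - 1) / 2) * qFact17 r) *
      ∏ k : Fin r, ∏ s ∈ Finset.univ.filter (fun s => k < s), (X k - X s) ^ 2 := by
  have ht : C q17⁻¹ ^ 2 ≠ (1 : MvPolynomial (Fin r) K17) := by
    rw [← map_pow, ← C_1, Ne, C_inj, inv_pow, inv_eq_one]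
    exact RatFunc.X_sq_ne_one
  simp only [filter_lt_eq_Ioi]
  rw [inv_q17_pow_mul_qFact17]
  simp only [map_prod, map_sum, map_pow]
  exact sum_perm_prod_Ioi_sub_mul_mul_sub ht (X_injective (R := K17)) (X_ne_zero (R := K17))

/-- ∑_{σ∈S_r} ∏_{k<s}(z_{σ(k)} - q^{-2}z_{σ(s)})(z_{σ(k)} - z_{σ(s)})
   = q^{-r(r-1)/2}[r]!_q ∏_{k<s}(z_k - z_s)^2. -/
theorem statement17 (r : ℕ) (hr : 1 ≤ r) :
    ∑ σ : Equiv.Perm (Fin r),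
      ∏ k : Fin r, ∏ s ∈ Finset.univ.filter (fun s => k < s),
        ((X (σ k) - C (q17⁻¹ ^ 2) * X (σ s)) * (X (σ k) - X (σ s))) =
    C (q17⁻¹ ^ (r * (r - 1) / 2) * qFact17 r) *
      ∏ k : Fin r, ∏ s ∈ Finset.univ.filter (fun s => k < s), (X k - X s) ^ 2 :=
  statement17_general r
end
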